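/- arXiv:1003.0251 — 2 statements merged into one kernel-verified Lean document; each statement's English description precedes it below -/
import Mathlib

section
/- For every δ with 0 ≤ δ < 3/(4 + √6) there exist constants D₁, D₂ > 0 depending only on δ with the following property. Let m, N, s ∈ ℕ and let Ψ ∈ ℂ^{m×N} be a matrix whose restricted isometry constant of order 2s satisfies δ_{2s} ≤ δ. Let x ∈ ℂ^N, ε ≥ 0, and η ∈ ℂ^m with ‖η‖₂ ≤ ε, and set y = Ψx + η. Then every minimizer x# of ‖z‖₁ over the set {z ∈ ℂ^N : ‖Ψz − y‖₂ ≤ ε} satisfies ‖x − x#‖₁ ≤ D₁·σ_s(x)₁ + D₂·√s·ε. -/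
open MeasureTheory Finset Real

noncomputable section

/-- The `ℓ_p` norm of a vector `x ∈ ℂ^N`. -/
def lpNormC {N : ℕ} (p : ℝ) (x : Fin N → ℂ) : ℝ :=
  (∑ j, ‖x j‖ ^ p) ^ (1 / p)

/-- A vector is `s`-sparse if it has at most `s` nonzero entries. -/
def IsSparseC {N : ℕ} (s : ℕ) (y : Fin N → ℂ) : Prop :=
  ∃ T : Finset (Fin N), T.card ≤ s ∧ ∀ j ∉ T, y j = 0

/-- Error of best `s`-term approximation in the `ℓ_p` norm. -/
def bestApproxC {N : ℕ} (s : ℕ) (p : ℝ) (x : Fin N → ℂ) : ℝ :=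
  sInf { t | ∃ y : Fin N → ℂ, IsSparseC s y ∧ t = lpNormC p (x - y) }

/-- `HasRIPBound s δ Ψ` states that the restricted isometry constant `δ_s` of `Ψ` satisfies
`δ_s ≤ δ`, i.e. `(1-δ)‖c‖₂² ≤ ‖Ψc‖₂² ≤ (1+δ)‖c‖₂²` for all `s`-sparse vectors `c`. -/
def HasRIPBound {m N : ℕ} (s : ℕ) (δ : ℝ) (Ψ : Matrix (Fin m) (Fin N) ℂ) : Prop :=
  ∀ c : Fin N → ℂ, IsSparseC s c →
    (1 - δ) * lpNormC 2 c ^ 2 ≤ lpNormC 2 (Ψ.mulVec c) ^ 2 ∧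
    lpNormC 2 (Ψ.mulVec c) ^ 2 ≤ (1 + δ) * lpNormC 2 c ^ 2

/-- `c` minimizes the `ℓ₁`-norm over the set `S`. -/
def IsL1MinOnC {N : ℕ} (S : Set (Fin N → ℂ)) (c : Fin N → ℂ) : Prop :=
  c ∈ S ∧ ∀ z ∈ S, lpNormC 1 c ≤ lpNormC 1 z

/-!
Put `h = x - x#` and let `T₀` carry the `s` largest entries of `h`. Minimality of `‖x#‖₁` gives
the cone constraint `‖h_{T₀ᶜ}‖₁ ≤ ‖h_{T₀}‖₁ + 2 σ_s(x)₁`, and feasibility of `x` and `x#` gives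
`‖Ψh‖₂ ≤ 2ε`. Hence the tail `h_{T₀ᶜ}` lies in the polytope `‖w‖_∞ ≤ α`, `‖w‖₁ ≤ s α` with
`s α = ‖h_{T₀}‖₁ + 2 σ_s(x)₁`. The extreme points of this polytope are `s`-sparse (Cai–Zhang),
so by Krein–Milman the bound `⟪Ψa, Ψu⟫ ≥ ⟪a, u⟫ - δ/2 (‖a‖₂² + ‖u‖₂²)`, which the RIP of
order `2s` gives by polarization for `s`-sparse `a` and `u`, extends to `a = h_{T₀}`,
`u = h_{T₀ᶜ}`. Combined with `(1 - δ)‖h_{T₀}‖₂² ≤ ‖Ψh_{T₀}‖₂²`, this is a quadratic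
inequality in `√s ‖h_{T₀}‖₂ ≥ ‖h_{T₀}‖₁` with leading coefficient `1 - 2δ > 0`, which bounds
`‖h_{T₀}‖₁`; the cone constraint then bounds `‖h‖₁`.
-/

open scoped RealInnerProductSpace

lemma lpNormC_one_eq_sum {N : ℕ} (x : Fin N → ℂ) : lpNormC 1 x = ∑ j, ‖x j‖ := by
  simp [lpNormC]

lemma lpNormC_two_eq_norm {N : ℕ} (x : Fin N → ℂ) : lpNormC 2 x = ‖WithLp.toLp 2 x‖ := by
  rw [EuclideanSpace.norm_eq, Real.sqrt_eq_rpow, lpNormC]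
  simp

section Sparse

variable {N s t : ℕ} {x y : Fin N → ℂ}

lemma IsSparseC.mono (hst : s ≤ t) (hx : IsSparseC s x) : IsSparseC t x :=
  let ⟨T, hT, hxT⟩ := hx
  ⟨T, hT.trans hst, hxT⟩

lemma IsSparseC.neg (hx : IsSparseC s x) : IsSparseC s (-x) :=
  let ⟨T, hT, hxT⟩ := hx
  ⟨T, hT, fun j hj => by simp [hxT j hj]⟩

lemma IsSparseC.add (hx : IsSparseC s x) (hy : IsSparseC t y) : IsSparseC (s + t) (x + y) := by
  classical
  obtain ⟨S, hS, hxS⟩ := hx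
  obtain ⟨T, hT, hyT⟩ := hy
  refine ⟨S ∪ T, (card_union_le S T).trans (add_le_add hS hT), fun j hj => ?_⟩
  rw [mem_union, not_or] at hj
  simp [hxS j hj.1, hyT j hj.2]

lemma IsSparseC.sub (hx : IsSparseC s x) (hy : IsSparseC t y) : IsSparseC (s + t) (x - y) := by
  simpa [sub_eq_add_neg] using hx.add hy.neg

lemma IsSparseC.sum_norm_le (hx : IsSparseC s x) : ∑ j, ‖x j‖ ≤ √s * ‖WithLp.toLp 2 x‖ := by
  obtain ⟨T, hT, hxT⟩ := hx
  have h₁ : ∑ j, ‖x j‖ = ∑ j ∈ T, ‖x j‖ :=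
    (sum_subset (subset_univ T) fun j _ hj => by simp [hxT j hj]).symm
  have h₂ : ∑ j, ‖x j‖ ^ 2 = ∑ j ∈ T, ‖x j‖ ^ 2 :=
    (sum_subset (subset_univ T) fun j _ hj => by simp [hxT j hj]).symm
  rw [EuclideanSpace.norm_eq, ← Real.sqrt_mul (Nat.cast_nonneg s), WithLp.ofLp_toLp, h₁, h₂]
  refine Real.le_sqrt_of_sq_le (sq_sum_le_card_mul_sum_sq.trans ?_)
  gcongr

lemma IsSparseC.norm_sq_le {α : ℝ} (hx : IsSparseC s x) (hα : ∀ j, ‖x j‖ ≤ α) :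
    ‖WithLp.toLp 2 x‖ ^ 2 ≤ s * α ^ 2 := by
  obtain ⟨T, hT, hxT⟩ := hx
  rw [EuclideanSpace.norm_sq_eq,
    ← sum_subset (subset_univ T) fun j _ hj => by simp [hxT j hj]]
  calc ∑ j ∈ T, ‖x j‖ ^ 2 ≤ ∑ _j ∈ T, α ^ 2 :=
        sum_le_sum fun j _ => pow_le_pow_left₀ (norm_nonneg _) (hα j) 2
    _ ≤ s * α ^ 2 := by rw [sum_const, nsmul_eq_mul]; gcongr

end Sparse

section RIP

variable {m N s t : ℕ} {δ : ℝ} {Ψ : Matrix (Fin m) (Fin N) ℂ} {x : Fin N → ℂ}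

lemma HasRIPBound.le_norm_sq (hΨ : HasRIPBound s δ Ψ) (hx : IsSparseC s x) :
    (1 - δ) * ‖WithLp.toLp 2 x‖ ^ 2 ≤ ‖WithLp.toLp 2 (Ψ.mulVec x)‖ ^ 2 := by
  simpa only [lpNormC_two_eq_norm] using (hΨ x hx).1

lemma HasRIPBound.norm_sq_le (hΨ : HasRIPBound s δ Ψ) (hx : IsSparseC s x) :
    ‖WithLp.toLp 2 (Ψ.mulVec x)‖ ^ 2 ≤ (1 + δ) * ‖WithLp.toLp 2 x‖ ^ 2 := by
  simpa only [lpNormC_two_eq_norm] using (hΨ x hx).2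

/-- `4 ⟪Ψx, Ψu⟫ = ‖Ψ(x + u)‖² - ‖Ψ(x - u)‖²`, and `x ± u` are `(s + t)`-sparse. -/
theorem HasRIPBound.inner_sub_le_inner_mulVec (hΨ : HasRIPBound (s + t) δ Ψ)
    (hx : IsSparseC s x) {u : Fin N → ℂ} (hu : IsSparseC t u) :
    ⟪WithLp.toLp 2 x, WithLp.toLp 2 u⟫ -
        δ / 2 * (‖WithLp.toLp 2 x‖ ^ 2 + ‖WithLp.toLp 2 u‖ ^ 2) ≤
      ⟪WithLp.toLp 2 (Ψ.mulVec x), WithLp.toLp 2 (Ψ.mulVec u)⟫ := by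
  have hadd := hΨ.le_norm_sq (hx.add hu)
  have hsub := hΨ.norm_sq_le (hx.sub hu)
  simp only [Matrix.mulVec_add, Matrix.mulVec_sub, WithLp.toLp_add, WithLp.toLp_sub,
    norm_add_sq_real, norm_sub_sq_real] at hadd hsub
  linarith

end RIP

lemma norm_add_div_norm_smul_self {E : Type*} [NormedAddCommGroup E] [NormedSpace ℝ E] {z : E}
    (hz : z ≠ 0) {ρ : ℝ} (hρ : -‖z‖ ≤ ρ) : ‖z + (ρ / ‖z‖) • z‖ = ‖z‖ + ρ := by
  have hz' : 0 < ‖z‖ := norm_pos_iff.2 hz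
  have h1 : 0 ≤ 1 + ρ / ‖z‖ := by
    have := (le_div_iff₀ hz').2 (by linarith : -1 * ‖z‖ ≤ ρ)
    linarith
  rw [show z + (ρ / ‖z‖) • z = (1 + ρ / ‖z‖) • z by rw [add_smul, one_smul], norm_smul,
    Real.norm_of_nonneg h1, add_mul, one_mul, div_mul_cancel₀ _ hz'.ne']

def cappedL1Ball {N : ℕ} (s : ℕ) (α : ℝ) : Set (Fin N → ℂ) :=
  {w | (∀ j, ‖w j‖ ≤ α) ∧ ∑ j, ‖w j‖ ≤ s * α}

section CappedL1Ball

variable {N s : ℕ} {α : ℝ}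

lemma convex_cappedL1Ball : Convex ℝ (cappedL1Ball (N := N) s α) := by
  rintro w ⟨hw, hw₁⟩ v ⟨hv, hv₁⟩ a b ha hb hab
  have hcomb : ∀ p q r : ℝ, p ≤ r → q ≤ r → a * p + b * q ≤ r := fun p q r hp hq => by
    have : a * r + b * r = r := by rw [← add_mul, hab, one_mul]
    nlinarith [mul_le_mul_of_nonneg_left hp ha, mul_le_mul_of_nonneg_left hq hb]
  have key : ∀ j, ‖(a • w + b • v) j‖ ≤ a * ‖w j‖ + b * ‖v j‖ := fun j =>
    (norm_add_le _ _).trans_eq (by simp [abs_of_nonneg ha, abs_of_nonneg hb])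
  refine ⟨fun j => (key j).trans (hcomb _ _ _ (hw j) (hv j)), ?_⟩
  refine (sum_le_sum fun j _ => key j).trans ?_
  rw [sum_add_distrib, ← mul_sum, ← mul_sum]
  exact hcomb _ _ _ hw₁ hv₁

lemma isCompact_cappedL1Ball : IsCompact (cappedL1Ball (N := N) s α) := by
  have hbox : IsCompact (Set.univ.pi fun _ : Fin N => Metric.closedBall (0 : ℂ) α) :=
    isCompact_univ_pi fun _ => isCompact_closedBall _ _
  refine hbox.of_isClosed_subset ?_ fun w hw =>
    Set.mem_univ_pi.2 fun j => mem_closedBall_zero_iff.2 (hw.1 j)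
  simp only [cappedL1Ball, Set.ofPred_and, Set.ofPred_forall]
  exact (isClosed_iInter fun j => isClosed_le (by fun_prop) continuous_const).inter
    (isClosed_le (by fun_prop) continuous_const)

lemma notMem_extremePoints_cappedL1Ball {u : Fin N → ℂ} {j k : Fin N} (hjk : j ≠ k)
    (hj : u j ≠ 0) (hjα : ‖u j‖ < α) (hk : u k ≠ 0) (hkα : ‖u k‖ < α) :
    u ∉ (cappedL1Ball s α).extremePoints ℝ := by
  intro hu
  set τ := min (min ‖u j‖ ‖u k‖) (min (α - ‖u j‖) (α - ‖u k‖))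
  have hτ : 0 < τ := lt_min (lt_min (norm_pos_iff.2 hj) (norm_pos_iff.2 hk))
    (lt_min (sub_pos.2 hjα) (sub_pos.2 hkα))
  have hτj : τ ≤ ‖u j‖ := (min_le_left _ _).trans (min_le_left _ _)
  have hτk : τ ≤ ‖u k‖ := (min_le_left _ _).trans (min_le_right _ _)
  have hτjα : τ ≤ α - ‖u j‖ := (min_le_right _ _).trans (min_le_left _ _)
  have hτkα : τ ≤ α - ‖u k‖ := (min_le_right _ _).trans (min_le_right _ _)
  -- `u + c • v` moves mass `c τ` from coordinate `k` to coordinate `j`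
  set v : Fin N → ℂ := Pi.single j ((τ / ‖u j‖) • u j) - Pi.single k ((τ / ‖u k‖) • u k)
  set e : Fin N → ℝ := Pi.single j τ - Pi.single k τ
  have hnorm : ∀ c : ℝ, |c| ≤ 1 → ∀ i, ‖(u + c • v) i‖ = ‖u i‖ + c * e i := by
    intro c hc i
    obtain ⟨hc₁, hc₂⟩ := abs_le.1 hc
    rcases eq_or_ne i j with rfl | hij
    · have : (u + c • v) i = u i + (c * τ / ‖u i‖) • u i := by
        simp [v, hjk]
        ring
      rw [this, norm_add_div_norm_smul_self hj (by nlinarith)]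
      simp [e, hjk]
    rcases eq_or_ne i k with rfl | hik
    · have : (u + c • v) i = u i + (-(c * τ) / ‖u i‖) • u i := by
        simp [v, hij]
        ring
      rw [this, norm_add_div_norm_smul_self hk (by nlinarith)]
      simp [e, hij]
    · simp [v, e, hij, hik]
  have hmem : ∀ c : ℝ, |c| ≤ 1 → u + c • v ∈ cappedL1Ball s α := by
    intro c hc
    obtain ⟨hc₁, hc₂⟩ := abs_le.1 hc
    refine ⟨fun i => ?_, ?_⟩
    · rw [hnorm c hc i]
      rcases eq_or_ne i j with rfl | hij
      · simp only [e, Pi.sub_apply, Pi.single_eq_same, Pi.single_eq_of_ne hjk]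
        nlinarith
      rcases eq_or_ne i k with rfl | hik
      · simp only [e, Pi.sub_apply, Pi.single_eq_same, Pi.single_eq_of_ne hij]
        nlinarith
      · simpa [e, hij, hik] using hu.1.1 i
    · simp_rw [hnorm c hc, sum_add_distrib, ← mul_sum]
      simpa [e, sum_sub_distrib] using hu.1.2
  have hseg : u ∈ openSegment ℝ (u + (1 : ℝ) • v) (u + (-1 : ℝ) • v) :=
    ⟨1 / 2, 1 / 2, by norm_num, by norm_num, by norm_num, by module⟩
  have := congr_fun (hu.2 (hmem 1 (by simp)) (hmem (-1) (by simp)) hseg) j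
  simp [v, hjk, hj, hτ.ne'] at this

lemma isSparseC_of_mem_extremePoints_cappedL1Ball {u : Fin N → ℂ}
    (hu : u ∈ (cappedL1Ball s α).extremePoints ℝ) : IsSparseC s u := by
  classical
  obtain ⟨hbox, hsum⟩ := hu.1
  set T := univ.filter fun i => u i ≠ 0
  refine ⟨T, ?_, fun i hi => by simpa [T] using hi⟩
  obtain hT | ⟨j₀, hj₀⟩ := T.eq_empty_or_nonempty
  · simp [hT]
  have hne : ∀ i ∈ T, u i ≠ 0 := fun i hi => (mem_filter.1 hi).2
  obtain ⟨j, hj, hjα⟩ : ∃ j ∈ T, ∀ i ∈ T, i ≠ j → ‖u i‖ = α := by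
    by_contra! H
    obtain ⟨k, hk, hkj, hkα⟩ := H j₀ hj₀
    obtain ⟨j, hj, hjk, hjα⟩ := H k hk
    exact notMem_extremePoints_cappedL1Ball hjk (hne j hj) ((hbox j).lt_of_ne hjα) (hne k hk)
      ((hbox k).lt_of_ne hkα) hu
  have hj₀ : 0 < ‖u j‖ := norm_pos_iff.2 (hne j hj)
  have hα : 0 < α := hj₀.trans_le (hbox j)
  have hT : ‖u j‖ + (#T - 1 : ℕ) * α ≤ s * α := by
    calc ‖u j‖ + (#T - 1 : ℕ) * α = ∑ i ∈ T, ‖u i‖ := by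
          rw [← add_sum_erase T _ hj, sum_congr rfl fun i hi =>
            hjα i (mem_of_mem_erase hi) (ne_of_mem_erase hi), sum_const, card_erase_of_mem hj,
            nsmul_eq_mul]
      _ ≤ ∑ i, ‖u i‖ := sum_le_sum_of_subset_of_nonneg (subset_univ _) fun _ _ _ => norm_nonneg _
      _ ≤ s * α := hsum
  have : ((#T - 1 : ℕ) : ℝ) < s := lt_of_mul_lt_mul_right (by linarith) hα.le
  have : #T - 1 < s := by exact_mod_cast this
  have := card_pos.2 ⟨j, hj⟩
  omega

theorem cappedL1Ball_subset_closure_convexHull :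
    cappedL1Ball s α ⊆ closure (convexHull ℝ {u : Fin N → ℂ | IsSparseC s u ∧ ∀ j, ‖u j‖ ≤ α}) := by
  conv_lhs => rw [← closure_convexHull_extremePoints isCompact_cappedL1Ball convex_cappedL1Ball]
  exact closure_mono <| convexHull_mono fun u hu =>
    ⟨isSparseC_of_mem_extremePoints_cappedL1Ball hu, hu.1.1⟩

end CappedL1Ball

section RIPBall

variable {m N s t : ℕ} {δ α : ℝ} {Ψ : Matrix (Fin m) (Fin N) ℂ} {x w : Fin N → ℂ}

theorem HasRIPBound.inner_sub_le_inner_mulVec_of_mem_cappedL1Ball (hΨ : HasRIPBound (s + t) δ Ψ)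
    (hδ : 0 ≤ δ) (hx : IsSparseC s x) (hw : w ∈ cappedL1Ball t α) :
    ⟪WithLp.toLp 2 x, WithLp.toLp 2 w⟫ - δ / 2 * (‖WithLp.toLp 2 x‖ ^ 2 + t * α ^ 2) ≤
      ⟪WithLp.toLp 2 (Ψ.mulVec x), WithLp.toLp 2 (Ψ.mulVec w)⟫ := by
  set g : (Fin N → ℂ) → ℝ := fun u =>
    ⟪WithLp.toLp 2 (Ψ.mulVec x), WithLp.toLp 2 (Ψ.mulVec u)⟫ - ⟪WithLp.toLp 2 x, WithLp.toLp 2 u⟫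
  have hg : IsLinearMap ℝ g := by
    constructor
    · intro u v
      simp only [g, Matrix.mulVec_add, WithLp.toLp_add, inner_add_right]
      ring
    · intro r u
      simp only [g, Matrix.mulVec_smul, WithLp.toLp_smul, real_inner_smul_right, smul_eq_mul]
      ring
  set H := {u | -(δ / 2 * (‖WithLp.toLp 2 x‖ ^ 2 + t * α ^ 2)) ≤ g u}
  have hH : IsClosed H :=
    isClosed_le continuous_const ((hg.mk' g).continuous_of_finiteDimensional)
  have hsparse : {u | IsSparseC t u ∧ ∀ j, ‖u j‖ ≤ α} ⊆ H := fun u ⟨hu, huα⟩ => by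
    have := hΨ.inner_sub_le_inner_mulVec hx hu
    have := mul_le_mul_of_nonneg_left (hu.norm_sq_le huα) hδ
    simp only [H, g, Set.mem_ofPred_eq]
    nlinarith
  have := closure_minimal (convexHull_min hsparse (convex_halfSpace_ge hg _)) hH
    (cappedL1Ball_subset_closure_convexHull hw)
  simp only [H, g, Set.mem_ofPred_eq] at this
  linarith

theorem HasRIPBound.one_sub_mul_norm_sq_le (hΨ : HasRIPBound (s + t) δ Ψ) (hδ : 0 ≤ δ)
    (hx : IsSparseC s x) (hw : w ∈ cappedL1Ball t α)
    (horth : ⟪WithLp.toLp 2 x, WithLp.toLp 2 w⟫ = 0) {ε : ℝ}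
    (hε : ‖WithLp.toLp 2 (Ψ.mulVec (x + w))‖ ≤ 2 * ε) :
    (1 - δ) * ‖WithLp.toLp 2 x‖ ^ 2 ≤
      2 * √(1 + δ) * ε * ‖WithLp.toLp 2 x‖ + δ / 2 * (‖WithLp.toLp 2 x‖ ^ 2 + t * α ^ 2) := by
  have hε0 : 0 ≤ ε := by linarith [norm_nonneg (WithLp.toLp 2 (Ψ.mulVec (x + w)))]
  have hcross := hΨ.inner_sub_le_inner_mulVec_of_mem_cappedL1Ball hδ hx hw
  have hx' := hx.mono (Nat.le_add_right s t)
  have hlow := hΨ.le_norm_sq hx'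
  have hΨx : ‖WithLp.toLp 2 (Ψ.mulVec x)‖ ≤ √(1 + δ) * ‖WithLp.toLp 2 x‖ := by
    have := Real.sqrt_le_sqrt (hΨ.norm_sq_le hx')
    rwa [Real.sqrt_sq (norm_nonneg _), Real.sqrt_mul (by linarith),
      Real.sqrt_sq (norm_nonneg _)] at this
  have hsplit : ⟪WithLp.toLp 2 (Ψ.mulVec x), WithLp.toLp 2 (Ψ.mulVec (x + w))⟫ =
      ‖WithLp.toLp 2 (Ψ.mulVec x)‖ ^ 2 +
        ⟪WithLp.toLp 2 (Ψ.mulVec x), WithLp.toLp 2 (Ψ.mulVec w)⟫ := by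
    rw [Matrix.mulVec_add, WithLp.toLp_add, inner_add_right, real_inner_self_eq_norm_sq]
  have hCS := (real_inner_le_norm (WithLp.toLp 2 (Ψ.mulVec x)) _).trans
    (mul_le_mul_of_nonneg_left hε (norm_nonneg _))
  nlinarith [mul_le_mul_of_nonneg_right hΨx (by linarith : (0 : ℝ) ≤ 2 * ε)]

end RIPBall

lemma le_div_add_sqrt_div_of_mul_sq_le {A B C t : ℝ} (hA : 0 < A) (hB : 0 ≤ B) (hC : 0 ≤ C)
    (h : A * t ^ 2 ≤ B * t + C) : t ≤ B / A + √(C / A) := by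
  have hq := Real.sq_sqrt (div_nonneg hC hA.le)
  have hq0 := Real.sqrt_nonneg (C / A)
  have hr0 := div_nonneg hB hA.le
  have h' : t ^ 2 ≤ B / A * t + √(C / A) ^ 2 := by
    rw [hq, div_mul_eq_mul_div, ← add_div, le_div_iff₀ hA]
    linarith
  by_contra! hlt
  nlinarith [mul_lt_mul_of_pos_right hlt (by linarith : 0 < t)]

lemma le_of_rip_quadratic {δ σ E ℓ τ : ℝ} (hδ0 : 0 ≤ δ) (hδ : δ < 1 / 2) (hσ : 0 ≤ σ) (hE : 0 ≤ E)
    (hℓ0 : 0 ≤ ℓ) (hℓ : ℓ ≤ τ)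
    (h : (1 - δ) * τ ^ 2 ≤ 2 * √(1 + δ) * σ * τ + δ / 2 * (τ ^ 2 + (ℓ + 2 * E) ^ 2)) :
    ℓ ≤ (2 * δ / (1 - 2 * δ) + √(2 * δ / (1 - 2 * δ))) * E + 2 * √(1 + δ) / (1 - 2 * δ) * σ := by
  have hA : 0 < 1 - 2 * δ := by linarith
  have hsq : (ℓ + 2 * E) ^ 2 ≤ (τ + 2 * E) ^ 2 := pow_le_pow_left₀ (by positivity) (by linarith) 2
  have hquad : (1 - 2 * δ) * τ ^ 2 ≤ (2 * √(1 + δ) * σ + 2 * δ * E) * τ + 2 * δ * E ^ 2 := by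
    nlinarith [mul_le_mul_of_nonneg_left hsq hδ0]
  have := le_div_add_sqrt_div_of_mul_sq_le hA (by positivity) (by positivity) hquad
  rw [show 2 * δ * E ^ 2 / (1 - 2 * δ) = 2 * δ / (1 - 2 * δ) * E ^ 2 by ring,
    Real.sqrt_mul (by positivity), Real.sqrt_sq hE] at this
  calc ℓ ≤ τ := hℓ
    _ ≤ _ := this
    _ = _ := by ring

lemma inner_indicator_indicator_compl {N : ℕ} (S : Set (Fin N)) (h : Fin N → ℂ) :
    ⟪WithLp.toLp 2 (S.indicator h), WithLp.toLp 2 (Sᶜ.indicator h)⟫ = 0 := by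
  rw [PiLp.inner_apply, sum_eq_zero fun j _ => ?_]
  by_cases hj : j ∈ S <;> simp [hj]

lemma indicator_compl_mem_cappedL1Ball {N s : ℕ} {h : Fin N → ℂ} {T : Finset (Fin N)} {c : ℝ}
    (hs : 0 < s) (hmax : ∀ j ∉ T, s * ‖h j‖ ≤ c) (hc : ∑ j ∈ Tᶜ, ‖h j‖ ≤ c) :
    (T : Set (Fin N))ᶜ.indicator h ∈ cappedL1Ball s (c / s) := by
  have hs' : (0 : ℝ) < s := Nat.cast_pos.2 hs
  refine ⟨fun j => ?_, ?_⟩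
  · rw [le_div_iff₀ hs', mul_comm]
    by_cases hj : j ∈ T
    · simpa [hj] using (sum_nonneg fun _ _ => norm_nonneg _).trans hc
    · simpa [hj] using hmax j hj
  · rw [mul_div_cancel₀ _ hs'.ne', ← coe_compl]
    simp_rw [norm_indicator_eq_indicator_norm]
    exact (sum_indicator_subset _ (subset_univ _)).trans_le hc

theorem HasRIPBound.sum_norm_le_of_cone {m N s : ℕ} {δ : ℝ} {Ψ : Matrix (Fin m) (Fin N) ℂ}
    (hΨ : HasRIPBound (2 * s) δ Ψ) (hδ0 : 0 ≤ δ) (hδ : δ < 1 / 2) {h : Fin N → ℂ}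
    {T : Finset (Fin N)} {E ε : ℝ} (hE : 0 ≤ E) (hT : #T ≤ s)
    (hT_max : ∀ j ∉ T, s * ‖h j‖ ≤ ∑ i ∈ T, ‖h i‖)
    (hcone : ∑ j ∈ Tᶜ, ‖h j‖ ≤ ∑ j ∈ T, ‖h j‖ + 2 * E)
    (hε : ‖WithLp.toLp 2 (Ψ.mulVec h)‖ ≤ 2 * ε) :
    ∑ j ∈ T, ‖h j‖ ≤
      (2 * δ / (1 - 2 * δ) + √(2 * δ / (1 - 2 * δ))) * E + 2 * √(1 + δ) / (1 - 2 * δ) * √s * ε := by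
  have hε0 : 0 ≤ ε := by linarith [norm_nonneg (WithLp.toLp 2 (Ψ.mulVec h))]
  obtain rfl | hs := Nat.eq_zero_or_pos s
  · rw [card_eq_zero.1 (Nat.le_zero.1 hT), sum_empty]
    have : 0 ≤ 2 * δ / (1 - 2 * δ) := div_nonneg (by linarith) (by linarith)
    simp only [CharP.cast_eq_zero, Real.sqrt_zero, mul_zero, zero_mul, add_zero]
    positivity
  set ℓ := ∑ j ∈ T, ‖h j‖
  set x := (T : Set (Fin N)).indicator h
  have hs' : (0 : ℝ) < s := Nat.cast_pos.2 hs
  have hx : IsSparseC s x := ⟨T, hT, fun j hj => Set.indicator_of_notMem hj h⟩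
  have hxℓ : ∑ j, ‖x j‖ = ℓ := by
    simp_rw [x, norm_indicator_eq_indicator_norm]
    exact sum_indicator_subset _ (subset_univ T)
  have hw := indicator_compl_mem_cappedL1Ball hs
    (fun j hj => (hT_max j hj).trans (le_add_of_nonneg_right (by positivity))) hcone
  have key := (two_mul s ▸ hΨ).one_sub_mul_norm_sq_le hδ0 hx hw
    (inner_indicator_indicator_compl _ h) (by rwa [Set.indicator_self_add_compl])
  refine (le_of_rip_quadratic (σ := √s * ε) hδ0 hδ (by positivity) hE
    (sum_nonneg fun _ _ => norm_nonneg _) (hxℓ ▸ hx.sum_norm_le) ?_).trans_eq (by ring)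
  have hss : √(s : ℝ) ^ 2 = s := Real.sq_sqrt hs'.le
  have hsα : s * (s * ((ℓ + 2 * E) / s) ^ 2) = (ℓ + 2 * E) ^ 2 := by field_simp
  linear_combination mul_le_mul_of_nonneg_left key hs'.le +
    ((1 - δ - δ / 2) * ‖WithLp.toLp 2 x‖ ^ 2 - 2 * √(1 + δ) * ε * ‖WithLp.toLp 2 x‖) * hss +
    δ / 2 * hsα

section L1

variable {ι E : Type*} [Fintype ι] [DecidableEq ι] [SeminormedAddCommGroup E]

lemma exists_card_le_forall_sum_le (a : ι → ℝ) (ha : 0 ≤ a) (s : ℕ) :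
    ∃ T : Finset ι, #T ≤ s ∧ (∀ S : Finset ι, #S ≤ s → ∑ i ∈ S, a i ≤ ∑ i ∈ T, a i) ∧
      ∀ j ∉ T, s * a j ≤ ∑ i ∈ T, a i := by
  obtain ⟨T, hT, hmax⟩ := exists_max_image (univ.filter fun T : Finset ι => #T ≤ s)
    (fun T => ∑ i ∈ T, a i) ⟨∅, by simp⟩
  rw [mem_filter] at hT
  refine ⟨T, hT.2, fun S hS => hmax S (by simpa using hS), fun j hj => ?_⟩
  rcases hT.2.lt_or_eq with hlt | rfl
  · -- there is room to add `j`
    have := hmax (insert j T) (by simpa [card_insert_of_notMem hj] using hlt)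
    rw [sum_insert hj] at this
    have : a j = 0 := le_antisymm (by linarith) (ha j)
    rw [this, mul_zero]
    exact sum_nonneg fun i _ => ha i
  · -- exchanging any `i ∈ T` for `j` does not increase the sum
    rw [← nsmul_eq_mul]
    refine card_nsmul_le_sum _ _ _ fun i hi => ?_
    have := hmax (insert j (T.erase i)) (by
      simp [card_insert_of_notMem (fun h => hj (mem_of_mem_erase h)), card_erase_of_mem hi,
        Nat.sub_add_cancel (card_pos.2 ⟨i, hi⟩)])
    rw [sum_insert (fun h => hj (mem_of_mem_erase h)), sum_erase_eq_sub hi] at this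
    linarith

lemma sum_compl_norm_sub_le {x z : ι → E} (hz : ∑ i, ‖z i‖ ≤ ∑ i, ‖x i‖) (T : Finset ι) :
    ∑ i ∈ Tᶜ, ‖x i - z i‖ ≤ ∑ i ∈ T, ‖x i - z i‖ + 2 * ∑ i ∈ Tᶜ, ‖x i‖ := by
  have hT : ∑ i ∈ T, ‖x i‖ - ∑ i ∈ T, ‖x i - z i‖ ≤ ∑ i ∈ T, ‖z i‖ := by
    rw [← sum_sub_distrib]
    exact sum_le_sum fun i _ => by simpa using norm_sub_norm_le (x i) (x i - z i)
  have hTc : ∑ i ∈ Tᶜ, ‖x i - z i‖ - ∑ i ∈ Tᶜ, ‖x i‖ ≤ ∑ i ∈ Tᶜ, ‖z i‖ := by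
    rw [← sum_sub_distrib]
    exact sum_le_sum fun i _ => by linarith [norm_sub_le (x i) (z i)]
  have := sum_add_sum_compl T fun i => ‖x i‖
  have := sum_add_sum_compl T fun i => ‖z i‖
  linarith

lemma sum_compl_le_of_forall_sum_le {a : ι → ℝ} {s : ℕ} {T T₀ : Finset ι} {c : ℝ}
    (hT₀ : ∀ S : Finset ι, #S ≤ s → ∑ i ∈ S, a i ≤ ∑ i ∈ T₀, a i) (hT : #T ≤ s)
    (h : ∑ i ∈ Tᶜ, a i ≤ ∑ i ∈ T, a i + c) : ∑ i ∈ T₀ᶜ, a i ≤ ∑ i ∈ T₀, a i + c := by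
  have := sum_add_sum_compl T a
  have := sum_add_sum_compl T₀ a
  linarith [hT₀ T hT]

end L1

lemma sum_compl_norm_le_lpNormC_one_sub {N : ℕ} {x y : Fin N → ℂ} {T : Finset (Fin N)}
    (hy : ∀ j ∉ T, y j = 0) : ∑ j ∈ Tᶜ, ‖x j‖ ≤ lpNormC 1 (x - y) := by
  rw [lpNormC_one_eq_sum]
  calc ∑ j ∈ Tᶜ, ‖x j‖ = ∑ j ∈ Tᶜ, ‖(x - y) j‖ :=
        sum_congr rfl fun j hj => by rw [Pi.sub_apply, hy j (mem_compl.1 hj), sub_zero]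
    _ ≤ ∑ j, ‖(x - y) j‖ :=
        sum_le_sum_of_subset_of_nonneg (subset_univ _) fun _ _ _ => norm_nonneg _

lemma le_mul_bestApproxC_add {N s : ℕ} {x : Fin N → ℂ} {a b D : ℝ} (hD : 0 < D)
    (h : ∀ y, IsSparseC s y → a ≤ D * lpNormC 1 (x - y) + b) :
    a ≤ D * bestApproxC s 1 x + b := by
  have hne : {t | ∃ y : Fin N → ℂ, IsSparseC s y ∧ t = lpNormC 1 (x - y)}.Nonempty :=
    ⟨_, 0, ⟨∅, by simp, fun _ _ => rfl⟩, rfl⟩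
  have : (a - b) / D ≤ bestApproxC s 1 x := le_csInf hne <| by
    rintro _ ⟨y, hy, rfl⟩
    rw [div_le_iff₀ hD]
    linarith [h y hy]
  rw [div_le_iff₀ hD] at this
  linarith

lemma norm_mulVec_sub_le {m N : ℕ} {Ψ : Matrix (Fin m) (Fin N) ℂ} {y : Fin m → ℂ}
    {x z : Fin N → ℂ} {ε : ℝ} (hx : lpNormC 2 (Ψ.mulVec x - y) ≤ ε)
    (hz : lpNormC 2 (Ψ.mulVec z - y) ≤ ε) : ‖WithLp.toLp 2 (Ψ.mulVec (x - z))‖ ≤ 2 * ε := by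
  rw [lpNormC_two_eq_norm] at hx hz
  rw [Matrix.mulVec_sub, ← sub_sub_sub_cancel_right _ _ y, WithLp.toLp_sub]
  linarith [norm_sub_le (WithLp.toLp 2 (Ψ.mulVec x - y)) (WithLp.toLp 2 (Ψ.mulVec z - y))]

/-- **Sparse recovery for RIP matrices, `ℓ₁` bound**: if `δ_{2s} ≤ δ < 3/(4+√6)`, every
minimizer of the noise-aware `ℓ₁`-minimization problem satisfies
`‖x - x#‖₁ ≤ D₁ σ_s(x)₁ + D₂ √s ε`. -/
theorem rip_l1_recovery_l1_bound (δ : ℝ) (hδ0 : 0 ≤ δ) (hδ : δ < 3 / (4 + Real.sqrt 6)) :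
    ∃ D₁ D₂ : ℝ, 0 < D₁ ∧ 0 < D₂ ∧
      ∀ (m N s : ℕ) (Ψ : Matrix (Fin m) (Fin N) ℂ), HasRIPBound (2 * s) δ Ψ →
        ∀ (x : Fin N → ℂ) (ε : ℝ) (η : Fin m → ℂ), 0 ≤ ε → lpNormC 2 η ≤ ε →
          ∀ xhat : Fin N → ℂ,
            IsL1MinOnC
              {z : Fin N → ℂ | lpNormC 2 (Ψ.mulVec z - (Ψ.mulVec x + η)) ≤ ε} xhat →
            lpNormC 1 (x - xhat) ≤ D₁ * bestApproxC s 1 x + D₂ * Real.sqrt s * ε := by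
  have hδ' : δ < 1 / 2 := hδ.trans_le <| by
    rw [div_le_div_iff₀ (by positivity) two_pos]
    nlinarith [Real.sq_sqrt (show (0 : ℝ) ≤ 6 by norm_num), Real.sqrt_nonneg 6]
  have hA : 0 < 1 - 2 * δ := by linarith
  refine ⟨2 * (2 * δ / (1 - 2 * δ) + √(2 * δ / (1 - 2 * δ))) + 2,
    2 * (2 * √(1 + δ) / (1 - 2 * δ)), by positivity, by positivity, ?_⟩
  rintro m N s Ψ hΨ x ε η - hη xhat ⟨hxhat, hmin⟩
  have hx : lpNormC 2 (Ψ.mulVec x - (Ψ.mulVec x + η)) ≤ ε := by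
    simpa [lpNormC_two_eq_norm] using hη
  have hl1 : ∑ j, ‖xhat j‖ ≤ ∑ j, ‖x j‖ := by simpa [lpNormC_one_eq_sum] using hmin x hx
  obtain ⟨T₀, hT₀, hT₀max, hT₀tail⟩ :=
    exists_card_le_forall_sum_le (fun j => ‖(x - xhat) j‖) (fun _ => norm_nonneg _) s
  refine le_mul_bestApproxC_add (by positivity) fun y ⟨T, hT, hy⟩ => ?_
  have hcone := sum_compl_le_of_forall_sum_le hT₀max hT <|
    (sum_compl_norm_sub_le hl1 T).trans <| by grw [sum_compl_norm_le_lpNormC_one_sub hy]; rfl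
  have hhead := hΨ.sum_norm_le_of_cone hδ0 hδ' (by rw [lpNormC_one_eq_sum]; positivity) hT₀
    hT₀tail hcone (norm_mulVec_sub_le hx hxhat)
  rw [lpNormC_one_eq_sum, ← sum_add_sum_compl T₀]
  linarith
end
end

section
/- Let N ∈ ℕ, s ≥ 1, x ∈ ℝ^N, and let x̂ ∈ ℝ^N be 2s-sparse. Then ‖x − x̂‖₁ ≤ σ_s(x)₁ + √(3s)·‖x − x̂‖₂. Consequently, for any constants C₁, C₂ > 0 and ε ≥ 0, if ‖x − x̂‖₂ ≤ C₁·σ_s(x)₁/√s + C₂·ε, then ‖x − x̂‖₁ ≤ (1 + √3·C₁)·σ_s(x)₁ + √3·C₂·√s·ε. -/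
/-!
Let `y` be any `s`-sparse vector and let `T` be the union of the supports of `y` and of the
`2s`-sparse `x̂`. Off `T` the vectors `x - x̂` and `x - y` agree, so that part of `‖x - x̂‖₁` is at
most `‖x - y‖₁`; on `T`, which has at most `3s` elements, Cauchy–Schwarz bounds it by
`√(3s)·‖x - x̂‖₂`. Taking the infimum over `y` gives the first inequality, and the second follows by
substituting the `ℓ₂` bound, using `√s · (a / √s) ≤ a` for `a ≥ 0`.
-/

open MeasureTheory Finset Real

noncomputable section

/-- The `ℓ_p` norm of a vector `x ∈ ℝ^N`. -/
def lpNorm {N : ℕ} (p : ℝ) (x : Fin N → ℝ) : ℝ :=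
  (∑ j, |x j| ^ p) ^ (1 / p)

/-- A vector is `s`-sparse if it has at most `s` nonzero entries. -/
def IsSparse {N : ℕ} (s : ℕ) (y : Fin N → ℝ) : Prop :=
  ∃ T : Finset (Fin N), T.card ≤ s ∧ ∀ j ∉ T, y j = 0

/-- Error of best `s`-term approximation in the `ℓ_p` norm. -/
def bestApprox {N : ℕ} (s : ℕ) (p : ℝ) (x : Fin N → ℝ) : ℝ :=
  sInf { t | ∃ y : Fin N → ℝ, IsSparse s y ∧ t = lpNorm p (x - y) }

lemma lpNorm_one_eq {N : ℕ} (v : Fin N → ℝ) : lpNorm 1 v = ∑ j, |v j| := by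
  simp [_root_.lpNorm]

lemma lpNorm_two_eq {N : ℕ} (v : Fin N → ℝ) : lpNorm 2 v = √(∑ j, v j ^ 2) := by
  rw [_root_.lpNorm, sqrt_eq_rpow]
  congr 1
  refine sum_congr rfl fun j _ => ?_
  rw [show (2 : ℝ) = ((2 : ℕ) : ℝ) by norm_num, rpow_natCast, sq_abs]

lemma lpNorm_nonneg {N : ℕ} (p : ℝ) (v : Fin N → ℝ) : 0 ≤ lpNorm p v :=
  rpow_nonneg (sum_nonneg fun j _ => rpow_nonneg (abs_nonneg (v j)) p) _

lemma sum_abs_le_sqrt_card_mul_lpNorm_two {N : ℕ} (T : Finset (Fin N)) (v : Fin N → ℝ) :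
    ∑ j ∈ T, |v j| ≤ √(#T : ℝ) * lpNorm 2 v := by
  have cauchySchwarz := sum_mul_le_sqrt_mul_sqrt T (fun _ => (1 : ℝ)) (fun j => |v j|)
  simp only [one_mul, one_pow, sq_abs, sum_const, nsmul_eq_mul, mul_one] at cauchySchwarz
  rw [lpNorm_two_eq]
  refine cauchySchwarz.trans (mul_le_mul_of_nonneg_left (sqrt_le_sqrt ?_) (sqrt_nonneg _))
  exact sum_le_sum_of_subset_of_nonneg (subset_univ T) fun j _ _ => sq_nonneg (v j)

lemma lpNorm_one_sub_le_of_isSparse {N s t : ℕ} {x y z : Fin N → ℝ}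
    (hy : IsSparse s y) (hz : IsSparse t z) :
    lpNorm 1 (x - z) ≤ lpNorm 1 (x - y) + √(s + t) * lpNorm 2 (x - z) := by
  obtain ⟨S, hS, hyS⟩ := hy
  obtain ⟨U, hU, hzU⟩ := hz
  have hoff : ∑ j ∈ (S ∪ U)ᶜ, |x j - z j| ≤ ∑ j, |x j - y j| := by
    calc ∑ j ∈ (S ∪ U)ᶜ, |x j - z j| = ∑ j ∈ (S ∪ U)ᶜ, |x j - y j| := by
          refine sum_congr rfl fun j hj => ?_
          simp only [mem_compl, mem_union, not_or] at hj
          rw [hyS j hj.1, hzU j hj.2]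
      _ ≤ ∑ j, |x j - y j| :=
          sum_le_sum_of_subset_of_nonneg (subset_univ _) fun j _ _ => abs_nonneg _
  have hcard : ((#(S ∪ U) : ℕ) : ℝ) ≤ s + t := by
    exact_mod_cast (card_union_le S U).trans (Nat.add_le_add hS hU)
  have hon : ∑ j ∈ S ∪ U, |x j - z j| ≤ √(s + t) * lpNorm 2 (x - z) :=
    (sum_abs_le_sqrt_card_mul_lpNorm_two (S ∪ U) (x - z)).trans
      (mul_le_mul_of_nonneg_right (sqrt_le_sqrt hcard) (lpNorm_nonneg 2 (x - z)))
  rw [lpNorm_one_eq, lpNorm_one_eq, ← sum_compl_add_sum (S ∪ U)]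
  simp only [Pi.sub_apply] at hon ⊢
  linarith

lemma bestApprox_nonneg {N : ℕ} (s : ℕ) (p : ℝ) (x : Fin N → ℝ) : 0 ≤ bestApprox s p x :=
  sInf_nonneg fun _ ⟨y, _, ht⟩ => ht ▸ lpNorm_nonneg p (x - y)

lemma le_bestApprox {N s : ℕ} {p c : ℝ} {x : Fin N → ℝ}
    (h : ∀ y, IsSparse s y → c ≤ lpNorm p (x - y)) : c ≤ bestApprox s p x := by
  refine le_csInf ⟨_, 0, ⟨∅, by simp, fun j _ => rfl⟩, rfl⟩ ?_
  rintro _ ⟨y, hy, rfl⟩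
  exact h y hy

lemma lpNorm_one_sub_le_bestApprox_add {N t : ℕ} (s : ℕ) (x : Fin N → ℝ) {z : Fin N → ℝ}
    (hz : IsSparse t z) :
    lpNorm 1 (x - z) ≤ bestApprox s 1 x + √(s + t) * lpNorm 2 (x - z) :=
  sub_le_iff_le_add.mp <| le_bestApprox fun _ hy =>
    sub_le_iff_le_add.mpr (lpNorm_one_sub_le_of_isSparse hy hz)

lemma mul_div_le_of_nonneg {G₀ : Type*} [CommGroupWithZero G₀] [Preorder G₀] (a : G₀) {b : G₀}
    (hb : 0 ≤ b) : a * (b / a) ≤ b := by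
  rcases eq_or_ne a 0 with rfl | ha
  · simpa using hb
  · rw [mul_div_cancel₀ b ha]

theorem l1_error_from_l2_error_general (N s : ℕ) (x xhat : Fin N → ℝ)
    (hxhat : IsSparse (2 * s) xhat) :
    lpNorm 1 (x - xhat) ≤ bestApprox s 1 x + Real.sqrt (3 * s) * lpNorm 2 (x - xhat) ∧
    ∀ C₁ C₂ ε : ℝ, 0 < C₁ → 0 < C₂ → 0 ≤ ε →
      lpNorm 2 (x - xhat) ≤ C₁ * bestApprox s 1 x / Real.sqrt s + C₂ * ε →
      lpNorm 1 (x - xhat) ≤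
        (1 + Real.sqrt 3 * C₁) * bestApprox s 1 x + Real.sqrt 3 * C₂ * Real.sqrt s * ε := by
  set σ := bestApprox s 1 x
  have hl1 : lpNorm 1 (x - xhat) ≤ σ + √(3 * s) * lpNorm 2 (x - xhat) := by
    convert lpNorm_one_sub_le_bestApprox_add s x hxhat using 4
    push_cast
    ring
  refine ⟨hl1, fun C₁ C₂ ε hC₁ _ _ hl2 => ?_⟩
  have hσ : 0 ≤ C₁ * σ := mul_nonneg hC₁.le (bestApprox_nonneg s 1 x)
  calc lpNorm 1 (x - xhat) ≤ σ + √3 * √s * (C₁ * σ / √s + C₂ * ε) := by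
        rw [← sqrt_mul zero_le_three]
        exact hl1.trans (by gcongr)
    _ = σ + √3 * (√s * (C₁ * σ / √s)) + √3 * C₂ * √s * ε := by ring
    _ ≤ σ + √3 * (C₁ * σ) + √3 * C₂ * √s * ε := by
        gcongr σ + √3 * ?_ + _
        exact mul_div_le_of_nonneg _ hσ
    _ = (1 + √3 * C₁) * σ + √3 * C₂ * √s * ε := by ring

/-- If `x̂` is `2s`-sparse then `‖x − x̂‖₁ ≤ σ_s(x)₁ + √(3s)·‖x − x̂‖₂`; consequently an
`ℓ₂` error bound of the form `C₁σ_s(x)₁/√s + C₂ε` yields the corresponding `ℓ₁` bound. -/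
theorem l1_error_from_l2_error (N s : ℕ) (hs : 1 ≤ s) (x xhat : Fin N → ℝ)
    (hxhat : IsSparse (2 * s) xhat) :
    lpNorm 1 (x - xhat) ≤ bestApprox s 1 x + Real.sqrt (3 * s) * lpNorm 2 (x - xhat) ∧
    ∀ C₁ C₂ ε : ℝ, 0 < C₁ → 0 < C₂ → 0 ≤ ε →
      lpNorm 2 (x - xhat) ≤ C₁ * bestApprox s 1 x / Real.sqrt s + C₂ * ε →
      lpNorm 1 (x - xhat) ≤
        (1 + Real.sqrt 3 * C₁) * bestApprox s 1 x + Real.sqrt 3 * C₂ * Real.sqrt s * ε :=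
  l1_error_from_l2_error_general N s x xhat hxhat
end
end
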